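/- arXiv:1709.08183 — 5 statements merged into one kernel-verified Lean document; each statement's English description precedes it below -/
import Mathlib

section
/- Let G be a countable amenable group and let L be a finite index subgroup of G which is congruent monotileable. If (U_n) is a congruent right Følner sequence of left monotiles of L and R is a complete set of right coset representatives of L in G (with 1_G ∈ R chosen as representative of L), then the sequence F_n := U_n R is a congruent right Følner sequence made of left monotiles of G. In particular, every countable amenable group with a congruent monotileable subgroup of finite index is congruent monotileable. -/
open Filter Pointwise

/-- `(F n)` is a right Følner sequence: the sets are nonempty and
`|F_n g \ F_n|/|F_n| → 0` for every `g`. -/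
def IsRightFolner {G : Type*} [Group G] [DecidableEq G] (F : ℕ → Finset G) : Prop :=
  (∀ n, (F n).Nonempty) ∧
    ∀ g : G, Tendsto (fun n => (((F n).image (· * g) \ F n).card : ℝ) / ((F n).card : ℝ))
      atTop (nhds 0)

/-- `F` is a left monotile of `G`: some collection of left translates `{c • F : c ∈ C}`
partitions `G`. -/
def IsLeftMonotile {G : Type*} [Group G] (F : Finset G) : Prop :=
  ∃ C : Set G, C.PairwiseDisjoint (fun c => c • (F : Set G)) ∧
    ⋃ c ∈ C, c • (F : Set G) = Set.univ

/-- `(F n)` is a congruent sequence: `1 ∈ F 0` and for every `n` there is `J` with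
`1 ∈ J` such that `{c • F n : c ∈ J}` partitions `F (n+1)`. -/
def IsCongruentSeq {G : Type*} [Group G] [DecidableEq G] (F : ℕ → Finset G) : Prop :=
  (1 : G) ∈ F 0 ∧ ∀ n, ∃ J : Finset G, (1 : G) ∈ J ∧
    ((J : Set G)).PairwiseDisjoint (fun c => (c • F n : Finset G)) ∧
    J.biUnion (fun c => c • F n) = F (n + 1)

/-- `G` is congruent monotileable: it admits an exhaustive congruent right Følner
sequence made of left monotiles. -/
def CongruentMonotileable (G : Type*) [Group G] [DecidableEq G] : Prop :=
  ∃ F : ℕ → Finset G, IsRightFolner F ∧ IsCongruentSeq F ∧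
    (∀ n, IsLeftMonotile (F n)) ∧ (⋃ n, (F n : Set G)) = Set.univ

/-! Since `R` is a right transversal of `L`, every `g ∈ G` factors uniquely as `g = l * r` with
`l ∈ L`, `r ∈ R`, and the `L`-factor `π g = l` (`leftFactor`) satisfies `π (l' * g) = l' * π g`. Hence
`U * R = π ⁻¹' U` and `c • (U * R) = π ⁻¹' (c • U)` for `c ∈ L`, so preimages under `π` carry
tilings, congruent decompositions and exhaustions of `L` to `G`. For the Følner condition,
`u * r * g = (u * π (r * g)) * r'` with `r' ∈ R`, whence `|(U * R) g \ U * R|` is at most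
`∑ r ∈ R, |U π (r * g) \ U|`, while `|U * R| = |U| * |R|`. -/

open scoped Finset

namespace Subgroup.IsComplement

section Factor

variable {G : Type*} [Group G] {L : Subgroup G} {R : Set G} (hR : IsComplement (L : Set G) R)

noncomputable def leftFactor (g : G) : L := ⟨(hR.equiv g).1, (hR.equiv g).1.2⟩

noncomputable def rightFactor (g : G) : G := (hR.equiv g).2

theorem rightFactor_mem (g : G) : hR.rightFactor g ∈ R := (hR.equiv g).2.2

@[simp]
theorem leftFactor_mul_rightFactor (g : G) : (hR.leftFactor g : G) * hR.rightFactor g = g :=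
  hR.equiv_fst_mul_equiv_snd g

theorem leftFactor_mul_left (l : L) (g : G) : hR.leftFactor (l * g) = l * hR.leftFactor g := by
  ext
  simp [leftFactor, hR.equiv_mul_left l g]

theorem leftFactor_of_mem {r : G} (hr : r ∈ R) : hR.leftFactor r = 1 := by
  ext
  simp [leftFactor, hR.equiv_fst_eq_one_of_mem_of_one_mem L.one_mem hr]

theorem leftFactor_mul_of_mem (l : L) {r : G} (hr : r ∈ R) : hR.leftFactor (l * r) = l := by
  rw [leftFactor_mul_left, hR.leftFactor_of_mem hr, mul_one]

theorem image_coe_mul_eq_preimage (A : Set L) : ((↑) '' A) * R = hR.leftFactor ⁻¹' A := by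
  ext x
  constructor
  · rintro ⟨_, ⟨l, hl, rfl⟩, r, hr, rfl⟩
    simpa [hR.leftFactor_mul_of_mem l hr] using hl
  · intro hx
    exact ⟨_, ⟨_, hx, rfl⟩, _, hR.rightFactor_mem x, hR.leftFactor_mul_rightFactor x⟩

theorem smul_preimage_leftFactor (l : L) (A : Set L) :
    (l : G) • hR.leftFactor ⁻¹' A = hR.leftFactor ⁻¹' (l • A) := by
  ext x
  simp [Set.mem_smul_set_iff_inv_smul_mem, ← leftFactor_mul_left]

theorem pairwiseDisjoint_smul_preimage_leftFactor {C A : Set L}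
    (h : C.PairwiseDisjoint (· • A)) :
    (((↑) : L → G) '' C).PairwiseDisjoint (· • hR.leftFactor ⁻¹' A) := by
  rw [Subtype.val_injective.injOn.pairwiseDisjoint_image]
  intro c hc c' hc' hne
  simpa [Function.onFun, smul_preimage_leftFactor] using (h hc hc' hne).preimage hR.leftFactor

theorem biUnion_smul_preimage_leftFactor (C A : Set L) :
    ⋃ c ∈ ((↑) : L → G) '' C, c • hR.leftFactor ⁻¹' A = hR.leftFactor ⁻¹' ⋃ c ∈ C, c • A := by
  simp only [Set.biUnion_image, smul_preimage_leftFactor, Set.preimage_iUnion]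

end Factor

section Transversal

variable {G : Type*} [Group G] [DecidableEq G] {L : Subgroup G} {R : Finset G}

theorem coe_image_coe_mul (hR : IsComplement (L : Set G) R) (U : Finset L) :
    ((U.image ((↑) : L → G) * R : Finset G) : Set G) = hR.leftFactor ⁻¹' U := by
  rw [Finset.coe_mul, Finset.coe_image, image_coe_mul_eq_preimage]

theorem mem_image_coe_mul_iff (hR : IsComplement (L : Set G) R) {U : Finset L} {x : G} :
    x ∈ U.image ((↑) : L → G) * R ↔ hR.leftFactor x ∈ U := by
  rw [← Finset.mem_coe, hR.coe_image_coe_mul, Set.mem_preimage, Finset.mem_coe]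

theorem card_image_coe_mul (hR : IsComplement (L : Set G) R) (U : Finset L) :
    #(U.image ((↑) : L → G) * R) = #U * #R := by
  rw [← Finset.card_image_of_injective U Subtype.val_injective, Finset.card_mul_iff]
  rintro ⟨_, r⟩ ⟨hu, hr⟩ ⟨_, r'⟩ ⟨hu', hr'⟩ h
  obtain ⟨u, -, rfl⟩ := Finset.mem_image.1 hu
  obtain ⟨u', -, rfl⟩ := Finset.mem_image.1 hu'
  have hu : u = u' := by
    simpa [hR.leftFactor_mul_of_mem _ hr, hR.leftFactor_mul_of_mem _ hr'] using
      congrArg hR.leftFactor h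
  subst hu
  simpa using h

theorem card_image_coe_mul_mul_sdiff_le (hR : IsComplement (L : Set G) R) (U : Finset L) (g : G) :
    #((U.image ((↑) : L → G) * R).image (· * g) \ (U.image ((↑) : L → G) * R)) ≤
      ∑ r ∈ R, #(U.image (· * hR.leftFactor (r * g)) \ U) := by
  calc _ ≤ #(R.biUnion fun r => (U.image (· * hR.leftFactor (r * g)) \ U).image
          fun l : L => (l : G) * hR.rightFactor (r * g)) := by
        apply Finset.card_le_card
        intro x hx
        obtain ⟨hxg, hxU⟩ := Finset.mem_sdiff.1 hx
        obtain ⟨y, hy, rfl⟩ := Finset.mem_image.1 hxg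
        rw [hR.mem_image_coe_mul_iff] at hy hxU
        have hyg : y * g = hR.leftFactor y * (hR.rightFactor y * g) := by
          rw [← mul_assoc, leftFactor_mul_rightFactor]
        rw [hyg, leftFactor_mul_left] at hxU
        simp only [Finset.mem_biUnion, Finset.mem_image, Finset.mem_sdiff]
        refine ⟨_, hR.rightFactor_mem y, _, ⟨⟨_, hy, rfl⟩, hxU⟩, ?_⟩
        rw [hyg, Subgroup.coe_mul, mul_assoc, leftFactor_mul_rightFactor]
    _ ≤ ∑ r ∈ R, #((U.image (· * hR.leftFactor (r * g)) \ U).image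
          fun l : L => (l : G) * hR.rightFactor (r * g)) := Finset.card_biUnion_le
    _ ≤ _ := Finset.sum_le_sum fun r _ => Finset.card_image_le

theorem isRightFolner_image_coe_mul (hR : IsComplement (L : Set G) R) {U : ℕ → Finset L}
    (hU : IsRightFolner U) : IsRightFolner (fun n => (U n).image ((↑) : L → G) * R) := by
  obtain ⟨hne, hU⟩ := hU
  refine ⟨fun n => ((hne n).image _).mul (Finset.coe_nonempty.1 hR.nonempty_right), fun g => ?_⟩
  have hbound : ∀ n, (#(((U n).image ((↑) : L → G) * R).image (· * g) \
      ((U n).image ((↑) : L → G) * R)) : ℝ) / #((U n).image ((↑) : L → G) * R) ≤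
      (∑ r ∈ R, (#((U n).image (· * hR.leftFactor (r * g)) \ U n) : ℝ) / #(U n)) / #R := by
    intro n
    rw [hR.card_image_coe_mul, Nat.cast_mul, ← Finset.sum_div, div_div]
    gcongr
    exact_mod_cast hR.card_image_coe_mul_mul_sdiff_le (U n) g
  have hlim := (tendsto_finsetSum R fun r _ => hU (hR.leftFactor (r * g))).div_const (#R : ℝ)
  rw [Finset.sum_const_zero, zero_div] at hlim
  exact squeeze_zero (fun n => by positivity) hbound hlim

theorem isLeftMonotile_image_coe_mul (hR : IsComplement (L : Set G) R) {U : Finset L}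
    (hU : IsLeftMonotile U) : IsLeftMonotile (U.image ((↑) : L → G) * R) := by
  obtain ⟨C, hdisj, hcover⟩ := hU
  refine ⟨(↑) '' C, ?_, ?_⟩
  · rw [hR.coe_image_coe_mul]
    exact hR.pairwiseDisjoint_smul_preimage_leftFactor hdisj
  · rw [hR.coe_image_coe_mul, biUnion_smul_preimage_leftFactor, hcover, Set.preimage_univ]

theorem isCongruentSeq_image_coe_mul (hR : IsComplement (L : Set G) R) (h1R : 1 ∈ R)
    {U : ℕ → Finset L} (hU : IsCongruentSeq U) :
    IsCongruentSeq (fun n => (U n).image ((↑) : L → G) * R) := by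
  obtain ⟨h1U, hstep⟩ := hU
  refine ⟨?_, fun n => ?_⟩
  · rw [← Finset.mem_coe, hR.coe_image_coe_mul, Set.mem_preimage, hR.leftFactor_of_mem h1R]
    exact h1U
  obtain ⟨J, h1J, hdisj, hunion⟩ := hstep n
  refine ⟨J.image (↑), Finset.mem_image_of_mem _ h1J, ?_, ?_⟩
  · rw [← Finset.pairwiseDisjoint_coe] at hdisj ⊢
    simp only [Finset.coe_image, Finset.coe_smul_finset, hR.coe_image_coe_mul] at hdisj ⊢
    exact hR.pairwiseDisjoint_smul_preimage_leftFactor hdisj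
  · apply Finset.coe_injective
    simp only [Finset.coe_biUnion, Finset.coe_image, Finset.coe_smul_finset, hR.coe_image_coe_mul,
      biUnion_smul_preimage_leftFactor, ← hunion]

theorem iUnion_coe_image_coe_mul (hR : IsComplement (L : Set G) R) {F : ℕ → Finset L}
    (hF : ⋃ n, (F n : Set L) = Set.univ) :
    ⋃ n, (((F n).image ((↑) : L → G) * R : Finset G) : Set G) = Set.univ := by
  simp only [hR.coe_image_coe_mul, ← Set.preimage_iUnion, hF, Set.preimage_univ]

theorem congruentMonotileable_of_isComplement (hR : IsComplement (L : Set G) R) (h1R : 1 ∈ R)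
    (hL : CongruentMonotileable L) : CongruentMonotileable G := by
  obtain ⟨F, hfolner, hcong, hmono, hexh⟩ := hL
  exact ⟨_, hR.isRightFolner_image_coe_mul hfolner, hR.isCongruentSeq_image_coe_mul h1R hcong,
    fun n => hR.isLeftMonotile_image_coe_mul (hmono n), hR.iUnion_coe_image_coe_mul hexh⟩

end Transversal

end Subgroup.IsComplement

theorem congruentMonotileable_of_finiteIndex_general {G : Type*} [Group G]
    [DecidableEq G] (L : Subgroup G)
    (U : ℕ → Finset L)
    (hUfolner : IsRightFolner U) (hUcong : IsCongruentSeq U)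
    (hUmono : ∀ n, IsLeftMonotile (U n))
    (R : Finset G) (h1R : (1 : G) ∈ R)
    (hR : ∀ g : G, ∃! r, r ∈ R ∧ g * r⁻¹ ∈ L) :
    (IsRightFolner (fun n => (U n).image ((↑·) : L → G) * R) ∧
      IsCongruentSeq (fun n => (U n).image ((↑·) : L → G) * R) ∧
      (∀ n, IsLeftMonotile ((U n).image ((↑·) : L → G) * R))) ∧
    (CongruentMonotileable L → CongruentMonotileable G) := by
  have hRL : Subgroup.IsComplement (L : Set G) R :=
    Subgroup.isComplement_iff_existsUnique_mul_inv_mem.2 fun g => by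
      obtain ⟨r, ⟨hr, hgr⟩, huniq⟩ := hR g
      exact ⟨⟨r, hr⟩, hgr, fun t ht => Subtype.ext (huniq t ⟨t.2, ht⟩)⟩
  exact ⟨⟨hRL.isRightFolner_image_coe_mul hUfolner, hRL.isCongruentSeq_image_coe_mul h1R hUcong,
    fun n => hRL.isLeftMonotile_image_coe_mul (hUmono n)⟩,
    hRL.congruentMonotileable_of_isComplement h1R⟩

/-- if `L` is a finite index subgroup of the countable group `G`,
`(U n)` is a congruent right Følner sequence of left monotiles of `L`, and `R` is a
complete set of right coset representatives of `L` in `G` containing `1`, then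
`F n := U n · R` is a congruent right Følner sequence made of left monotiles of `G`.
In particular, if `L` is congruent monotileable then so is `G`. -/
theorem congruentMonotileable_of_finiteIndex {G : Type*} [Group G] [Countable G]
    [DecidableEq G] (L : Subgroup G) [L.FiniteIndex]
    (U : ℕ → Finset L)
    (hUfolner : IsRightFolner U) (hUcong : IsCongruentSeq U)
    (hUmono : ∀ n, IsLeftMonotile (U n))
    (R : Finset G) (h1R : (1 : G) ∈ R)
    (hR : ∀ g : G, ∃! r, r ∈ R ∧ g * r⁻¹ ∈ L) :
    (IsRightFolner (fun n => (U n).image ((↑·) : L → G) * R) ∧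
      IsCongruentSeq (fun n => (U n).image ((↑·) : L → G) * R) ∧
      (∀ n, IsLeftMonotile ((U n).image ((↑·) : L → G) * R))) ∧
    (CongruentMonotileable L → CongruentMonotileable G) :=
  congruentMonotileable_of_finiteIndex_general L U hUfolner hUcong hUmono R h1R hR
end

section
/- Every countable abelian group is congruent monotileable: it admits an exhaustive congruent right Følner sequence made of left monotiles. -/
open Filter Pointwise

/-!
Enumerate `G` as `x 0, x 1, …` and let `Gₙ` be the subgroup generated by `x 0, …, x (n - 1)`.
If `kᵢ` is the order of `x i` modulo `Gᵢ` (with `kᵢ = 0` when it is infinite), every element of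
`G_N` is uniquely `∏_{i<N} x i ^ eᵢ` with `0 ≤ eᵢ < kᵢ` whenever `kᵢ ≠ 0`. The tile `F_N` is the
set of these products with `eᵢ ∈ [-3^(N-i-1), 3^(N-i-1))` whenever `kᵢ = 0`.

Tripling the free intervals makes `F_{N+1}` a disjoint union of translates of `F_N`; the lattice
of exponents in `2·3^(N-i-1)ℤ` tiles `G_N` by `F_N`, hence coset representatives of `G_N` tile
`G`. Multiplying by `g ∈ G_{m+1}` moves the free exponents `eᵢ`, `i ≤ m`, by a bounded amount,
while the intervals grow geometrically: this gives the Følner property.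
-/

namespace CongruentMonotile

open Set Topology

section Tiling

variable {G : Type*} [Group G]

theorem pairwiseDisjoint_smul_of_injOn_mul {A B : Set G}
    (h : InjOn (fun p : G × G => p.1 * p.2) (A ×ˢ B)) : A.PairwiseDisjoint (· • B) := by
  intro a ha a' ha' hne
  refine Set.disjoint_left.2 ?_
  rintro _ ⟨b, hb, rfl⟩ ⟨b', hb', hbb'⟩
  exact hne (Prod.ext_iff.1 (h (x₁ := (a', b')) (x₂ := (a, b)) ⟨ha', hb'⟩ ⟨ha, hb⟩ hbb')).1.symm

theorem biUnion_smul_eq_and_pairwiseDisjoint_of_bijOn [DecidableEq G] {J F T : Finset G}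
    (h : BijOn (fun p : G × G => p.1 * p.2) (↑J ×ˢ ↑F) ↑T) :
    J.biUnion (· • F) = T ∧ (J : Set G).PairwiseDisjoint (· • F) := by
  refine ⟨?_, fun a ha a' ha' hne => ?_⟩
  · rw [Finset.biUnion_smul_finset, ← Finset.coe_inj, Finset.coe_smul, ← Set.image_smul_prod]
    exact h.image_eq
  · rw [Function.onFun, ← Finset.disjoint_coe, Finset.coe_smul_finset, Finset.coe_smul_finset]
    exact pairwiseDisjoint_smul_of_injOn_mul h.injOn ha ha' hne

theorem isLeftMonotile_of_bijOn_subgroup (H : Subgroup G) {C : Set G} {F : Finset G}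
    (h : BijOn (fun p : G × G => p.1 * p.2) (C ×ˢ ↑F) H) : IsLeftMonotile F := by
  set T : Set G := range (Quotient.out : G ⧸ H → G)
  have mk_mul_mem {t c f : G} (hc : c ∈ C) (hf : f ∈ F) :
      (QuotientGroup.mk t : G ⧸ H) = QuotientGroup.mk (t * c * f) := by
    rw [QuotientGroup.eq, mul_assoc, inv_mul_cancel_left]
    exact h.mapsTo (x := (c, f)) ⟨hc, hf⟩
  refine ⟨T * C, pairwiseDisjoint_smul_of_injOn_mul ?_, ?_⟩
  · rintro ⟨_, f⟩ ⟨⟨_, ⟨q, rfl⟩, c, hc, rfl⟩, hf⟩ ⟨_, f'⟩ ⟨⟨_, ⟨q', rfl⟩, c', hc', rfl⟩, hf'⟩ heq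
    have hq : q = q' := by
      simpa only [← mk_mul_mem hc hf, ← mk_mul_mem hc' hf', QuotientGroup.out_eq'] using
        congrArg (QuotientGroup.mk : G → G ⧸ H) heq
    subst hq
    simp only [mul_assoc, mul_right_inj] at heq
    obtain ⟨rfl, rfl⟩ := Prod.ext_iff.1
      (h.injOn (x₁ := (c, f)) (x₂ := (c', f')) ⟨hc, hf⟩ ⟨hc', hf'⟩ heq)
    rfl
  · refine eq_univ_of_forall fun g => ?_
    set t := (QuotientGroup.mk g : G ⧸ H).out
    have ht : t⁻¹ * g ∈ H := by
      rw [← QuotientGroup.eq, QuotientGroup.out_eq']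
    obtain ⟨⟨c, f⟩, ⟨hc, hf⟩, hcf⟩ := h.surjOn ht
    rw [Set.iUnion_smul_left_image]
    refine ⟨t * c, ⟨t, ⟨_, rfl⟩, c, hc, rfl⟩, f, hf, ?_⟩
    simp only at hcf ⊢
    rw [smul_eq_mul, mul_assoc, hcf, mul_inv_cancel_left]

theorem card_image_mul_sdiff_le [DecidableEq G] {F F' : Finset G} {g : G}
    (hF' : F' ⊆ F) (hmul : ∀ a ∈ F', a * g ∈ F) :
    (F.image (· * g) \ F).card ≤ F.card - F'.card := by
  rw [← Finset.card_sdiff_of_subset hF']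
  calc (F.image (· * g) \ F).card ≤ ((F \ F').image (· * g)).card := by
        refine Finset.card_le_card fun b hb => ?_
        obtain ⟨hbF, hbnF⟩ := Finset.mem_sdiff.1 hb
        obtain ⟨a, ha, rfl⟩ := Finset.mem_image.1 hbF
        exact Finset.mem_image_of_mem _ (Finset.mem_sdiff.2 ⟨ha, fun ha' => hbnF (hmul a ha')⟩)
    _ ≤ (F \ F').card := Finset.card_image_le

end Tiling

theorem one_sub_sum_le_prod_one_sub {ι R : Type*} [LinearOrder ι] [CommRing R] [PartialOrder R]
    [IsOrderedRing R] (s : Finset ι) {f : ι → R} (h0 : ∀ i ∈ s, 0 ≤ f i)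
    (h1 : ∀ i ∈ s, f i ≤ 1) : 1 - ∑ i ∈ s, f i ≤ ∏ i ∈ s, (1 - f i) := by
  rw [Finset.prod_one_sub_ordered, sub_le_sub_iff_left]
  refine Finset.sum_le_sum fun i hi => mul_le_of_le_one_right (h0 i hi) ?_
  exact Finset.prod_le_one (fun j hj => sub_nonneg.2 (h1 j (Finset.mem_filter.1 hj).1))
    fun j hj => sub_le_self _ (h0 j (Finset.mem_filter.1 hj).1)

theorem prod_sub_prod_div_le_sum {ι 𝕜 : Type*} [LinearOrder ι] [Field 𝕜] [LinearOrder 𝕜]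
    [IsStrictOrderedRing 𝕜] (s : Finset ι) {a b : ι → 𝕜} (ha : ∀ i ∈ s, 0 < a i)
    (hb : ∀ i ∈ s, 0 ≤ b i) (hba : ∀ i ∈ s, b i ≤ a i) :
    (∏ i ∈ s, a i - ∏ i ∈ s, b i) / ∏ i ∈ s, a i ≤ ∑ i ∈ s, (a i - b i) / a i := by
  have hprod : ∏ i ∈ s, (1 - (a i - b i) / a i) = (∏ i ∈ s, b i) / ∏ i ∈ s, a i := by
    rw [← Finset.prod_div_distrib]
    refine Finset.prod_congr rfl fun i hi => ?_
    field_simp [(ha i hi).ne']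
    ring
  have key := one_sub_sum_le_prod_one_sub s (f := fun i => (a i - b i) / a i)
    (fun i hi => div_nonneg (sub_nonneg.2 (hba i hi)) (ha i hi).le)
    (fun i hi => (div_le_one (ha i hi)).2 (sub_le_self _ (hb i hi)))
  rw [sub_div, div_self (Finset.prod_pos ha).ne', ← hprod]
  linarith

theorem bijOn_mul_image_of_map_add {A G : Type*} [Add A] [Mul G] {f : A → G}
    (hf : ∀ a b, f (a + b) = f a * f b) {S D E : Set A}
    (h : BijOn (fun p : A × A => p.1 + p.2) (S ×ˢ D) E) (hinj : InjOn f E) :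
    BijOn (fun p : G × G => p.1 * p.2) ((f '' S) ×ˢ (f '' D)) (f '' E) := by
  refine ⟨?_, ?_, ?_⟩
  · rintro ⟨_, _⟩ ⟨⟨a, ha, rfl⟩, ⟨b, hb, rfl⟩⟩
    exact ⟨a + b, h.mapsTo (x := (a, b)) ⟨ha, hb⟩, hf a b⟩
  · rintro ⟨_, _⟩ ⟨⟨a, ha, rfl⟩, ⟨b, hb, rfl⟩⟩ ⟨_, _⟩ ⟨⟨a', ha', rfl⟩, ⟨b', hb', rfl⟩⟩ heq
    have hab : (a, b) ∈ S ×ˢ D := ⟨ha, hb⟩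
    have hab' : (a', b') ∈ S ×ˢ D := ⟨ha', hb'⟩
    simp only [← hf] at heq
    obtain ⟨rfl, rfl⟩ := Prod.ext_iff.1
      (h.injOn hab hab' (hinj (h.mapsTo hab) (h.mapsTo hab') heq))
    rfl
  · rintro _ ⟨e, he, rfl⟩
    obtain ⟨⟨a, b⟩, ⟨ha, hb⟩, rfl⟩ := h.surjOn he
    exact ⟨(f a, f b), ⟨mem_image_of_mem f ha, mem_image_of_mem f hb⟩, (hf a b).symm⟩

theorem bijOn_add_univ_pi {ι A : Type*} [Add A] {S D E : ι → Set A}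
    (h : ∀ i, BijOn (fun p : A × A => p.1 + p.2) (S i ×ˢ D i) (E i)) :
    BijOn (fun p : (ι → A) × (ι → A) => p.1 + p.2) (univ.pi S ×ˢ univ.pi D) (univ.pi E) := by
  refine ⟨?_, ?_, ?_⟩
  · rintro ⟨a, b⟩ ⟨ha, hb⟩ i -
    exact (h i).mapsTo (x := (a i, b i)) ⟨ha i trivial, hb i trivial⟩
  · rintro ⟨a, b⟩ ⟨ha, hb⟩ ⟨a', b'⟩ ⟨ha', hb'⟩ heq
    have hi i := Prod.ext_iff.1 ((h i).injOn (x₁ := (a i, b i)) (x₂ := (a' i, b' i))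
      ⟨ha i trivial, hb i trivial⟩ ⟨ha' i trivial, hb' i trivial⟩ (congrFun heq i))
    exact Prod.ext (funext fun i => (hi i).1) (funext fun i => (hi i).2)
  · intro e he
    choose p hp hpe using fun i => (h i).surjOn (he i trivial)
    exact ⟨(fun i => (p i).1, fun i => (p i).2), ⟨fun i _ => (hp i).1, fun i _ => (hp i).2⟩,
      funext hpe⟩

theorem bijOn_add_zero_left {A : Type*} [AddZeroClass A] (s : Set A) :
    BijOn (fun p : A × A => p.1 + p.2) ({0} ×ˢ s) s := by
  refine ⟨?_, ?_, fun a ha => ⟨(0, a), ⟨rfl, ha⟩, zero_add a⟩⟩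
  · rintro ⟨_, b⟩ ⟨rfl, hb⟩
    simpa using hb
  · rintro ⟨_, b⟩ ⟨rfl, -⟩ ⟨_, b'⟩ ⟨rfl, -⟩ h
    simpa using h

theorem bijOn_add_zero_right {A : Type*} [AddZeroClass A] (s : Set A) :
    BijOn (fun p : A × A => p.1 + p.2) (s ×ˢ {0}) s := by
  refine ⟨?_, ?_, fun a ha => ⟨(a, 0), ⟨ha, rfl⟩, add_zero a⟩⟩
  · rintro ⟨a, _⟩ ⟨ha, rfl⟩
    simpa using ha
  · rintro ⟨a, _⟩ ⟨-, rfl⟩ ⟨a', _⟩ ⟨-, rfl⟩ h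
    simpa using h

theorem bijOn_add_lattice_Ico {w : ℤ} (hw : 0 < w) :
    BijOn (fun p : ℤ × ℤ => p.1 + p.2) (range (2 * w * ·) ×ˢ Ico (-w) w) univ := by
  refine ⟨fun _ _ => trivial, ?_, fun c _ => ?_⟩
  · rintro ⟨_, r⟩ ⟨⟨p, rfl⟩, hr⟩ ⟨_, r'⟩ ⟨⟨p', rfl⟩, hr'⟩ h
    simp only [mem_Ico] at hr hr' h
    have hp : p = p' := by nlinarith
    subst hp
    simp only [Prod.mk.injEq, true_and]
    omega
  · refine ⟨(2 * w * ((c + w) / (2 * w)), (c + w) % (2 * w) - w), ⟨⟨_, rfl⟩, ?_⟩, ?_⟩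
    · have := Int.emod_nonneg (c + w) (by omega : 2 * w ≠ 0)
      have := Int.emod_lt_of_pos (c + w) (by omega : 0 < 2 * w)
      constructor <;> omega
    · have := Int.mul_ediv_add_emod (c + w) (2 * w)
      simp only
      omega

theorem bijOn_add_triple_Ico (w : ℤ) :
    BijOn (fun p : ℤ × ℤ => p.1 + p.2) (({-(2 * w), 0, 2 * w} : Set ℤ) ×ˢ Ico (-w) w)
      (Ico (-(3 * w)) (3 * w)) := by
  refine ⟨?_, ?_, fun c hc => ?_⟩
  · rintro ⟨s, r⟩ ⟨hs, hr⟩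
    simp only [mem_insert_iff, mem_singleton_iff, mem_Ico] at hs hr ⊢
    omega
  · rintro ⟨s, r⟩ ⟨hs, hr⟩ ⟨s', r'⟩ ⟨hs', hr'⟩ h
    simp only [mem_insert_iff, mem_singleton_iff, mem_Ico] at hs hr hs' hr' h
    simp only [Prod.mk.injEq]
    omega
  · simp only [mem_Ico] at hc
    rcases lt_or_ge c (-w) with h1 | h1
    · exact ⟨(-(2 * w), c + 2 * w), ⟨by simp, by simp only [mem_Ico]; omega⟩, by simp⟩
    rcases lt_or_ge c w with h2 | h2
    · exact ⟨(0, c), ⟨by simp, by simp only [mem_Ico]; omega⟩, by simp⟩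
    · exact ⟨(2 * w, c - 2 * w), ⟨by simp, by simp only [mem_Ico]; omega⟩, by simp⟩

def boxSet (D : ℕ → Set ℤ) (N : ℕ) : Set (ℕ → ℤ) := univ.pi fun i => if i < N then D i else {0}

theorem mem_boxSet {D : ℕ → Set ℤ} {N : ℕ} {e : ℕ → ℤ} :
    e ∈ boxSet D N ↔ (∀ i < N, e i ∈ D i) ∧ ∀ i, N ≤ i → e i = 0 := by
  simp only [boxSet, mem_univ_pi]
  refine ⟨fun h => ⟨fun i hi => ?_, fun i hi => ?_⟩, fun h i => ?_⟩
  · simpa [hi] using h i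
  · simpa [not_lt.2 hi] using h i
  · split_ifs with hi
    exacts [h.1 i hi, h.2 i (not_lt.1 hi)]

theorem boxSet_mono {D D' : ℕ → Set ℤ} {N : ℕ} (h : ∀ i < N, D i ⊆ D' i) :
    boxSet D N ⊆ boxSet D' N := fun _ he =>
  mem_boxSet.2 ⟨fun i hi => h i hi (mem_boxSet.1 he |>.1 i hi), (mem_boxSet.1 he).2⟩

theorem boxSet_update_zero (D : ℕ → Set ℤ) (N : ℕ) :
    boxSet (Function.update D N {0}) (N + 1) = boxSet D N := by
  ext e
  simp only [mem_boxSet]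
  constructor
  · rintro ⟨h1, h2⟩
    refine ⟨fun i hi => ?_, fun i hi => ?_⟩
    · simpa [Function.update_of_ne hi.ne] using h1 i (by omega)
    · rcases eq_or_lt_of_le hi with rfl | hi
      · simpa using h1 _ (Nat.lt_succ_self _)
      · exact h2 i hi
  · rintro ⟨h1, h2⟩
    refine ⟨fun i hi => ?_, fun i hi => h2 i (by omega)⟩
    rcases Nat.lt_succ_iff_lt_or_eq.1 hi with hi | rfl
    · simpa [Function.update_of_ne hi.ne] using h1 i hi
    · simpa using h2 i le_rfl

theorem bijOn_add_boxSet {S D E : ℕ → Set ℤ} {N : ℕ}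
    (h : ∀ i < N, BijOn (fun p : ℤ × ℤ => p.1 + p.2) (S i ×ˢ D i) (E i)) :
    BijOn (fun p : (ℕ → ℤ) × (ℕ → ℤ) => p.1 + p.2) (boxSet S N ×ˢ boxSet D N) (boxSet E N) := by
  refine bijOn_add_univ_pi fun i => ?_
  split_ifs with hi
  · exact h i hi
  · exact bijOn_add_zero_left {0}

open Classical in
noncomputable def boxFinset (D : ℕ → Finset ℤ) (N : ℕ) : Finset (ℕ → ℤ) :=
  (Fintype.piFinset fun i : Fin N => D i).image fun v i => if h : i < N then v ⟨i, h⟩ else 0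

theorem coe_boxFinset (D : ℕ → Finset ℤ) (N : ℕ) :
    (boxFinset D N : Set (ℕ → ℤ)) = boxSet (fun i => D i) N := by
  ext e
  simp only [boxFinset, Finset.coe_image, Fintype.coe_piFinset, mem_image, mem_boxSet]
  constructor
  · rintro ⟨v, hv, rfl⟩
    refine ⟨fun i hi => by simpa [hi] using hv ⟨i, hi⟩ trivial, fun i hi => by simp [not_lt.2 hi]⟩
  · rintro ⟨h1, h2⟩
    refine ⟨fun i => e i, fun i _ => h1 i i.2, funext fun i => ?_⟩
    split_ifs with hi
    · rfl
    · exact (h2 i (not_lt.1 hi)).symm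

theorem card_boxFinset (D : ℕ → Finset ℤ) (N : ℕ) :
    (boxFinset D N).card = ∏ i ∈ Finset.range N, (D i).card := by
  classical
  rw [boxFinset, Finset.card_image_of_injective, Fintype.card_piFinset,
    Fin.prod_univ_eq_prod_range (fun i => (D i).card)]
  intro v w hvw
  funext i
  simpa using congrFun hvw i

section NormalForm

variable {G : Type*} [CommGroup G] (x : ℕ → G)

def prefixClosure (n : ℕ) : Subgroup G := Subgroup.closure (x '' Iio n)

theorem mem_prefixClosure {i n : ℕ} (h : i < n) : x i ∈ prefixClosure x n :=
  Subgroup.subset_closure ⟨i, h, rfl⟩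

theorem prefixClosure_zero : prefixClosure x 0 = ⊥ := by
  simp [prefixClosure]

theorem prefixClosure_succ (n : ℕ) :
    prefixClosure x (n + 1) = Subgroup.zpowers (x n) ⊔ prefixClosure x n := by
  rw [prefixClosure, prefixClosure, ← Order.succ_eq_add_one, Order.Iio_succ_eq_insert,
    image_insert_eq, ← singleton_union, Subgroup.closure_union, Subgroup.zpowers_eq_closure]

/-- The order of `x i` modulo `prefixClosure x i`, which is `0` when that order is infinite. -/
noncomputable def relOrder (i : ℕ) : ℕ := orderOf (QuotientGroup.mk (x i) : G ⧸ prefixClosure x i)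

theorem zpow_mem_prefixClosure_iff {i : ℕ} {d : ℤ} :
    x i ^ d ∈ prefixClosure x i ↔ (relOrder x i : ℤ) ∣ d := by
  rw [relOrder, orderOf_dvd_iff_zpow_eq_one, ← QuotientGroup.mk_zpow, QuotientGroup.eq_one_iff]

def expProd (e : ℕ → ℤ) (N : ℕ) : G := ∏ i ∈ Finset.range N, x i ^ e i

theorem expProd_add (e f : ℕ → ℤ) (N : ℕ) :
    expProd x (e + f) N = expProd x e N * expProd x f N := by
  simp only [expProd, Pi.add_apply, zpow_add, Finset.prod_mul_distrib]

theorem expProd_succ (e : ℕ → ℤ) (N : ℕ) : expProd x e (N + 1) = x N ^ e N * expProd x e N := by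
  rw [expProd, Finset.prod_range_succ, mul_comm, expProd]

theorem expProd_zero (N : ℕ) : expProd x 0 N = 1 := by
  simp [expProd]

theorem expProd_mem (e : ℕ → ℤ) (N : ℕ) : expProd x e N ∈ prefixClosure x N :=
  Subgroup.prod_mem _ fun _ hi => zpow_mem (mem_prefixClosure x (Finset.mem_range.1 hi)) _

theorem expProd_eq_of_le {e : ℕ → ℤ} {M N : ℕ} (hMN : M ≤ N) (he : ∀ i, M ≤ i → e i = 0) :
    expProd x e N = expProd x e M := by
  refine (Finset.prod_subset (Finset.range_subset_range.2 hMN) fun i _ hi => ?_).symm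
  rw [he i (by simpa using hi), zpow_zero]

theorem expProd_congr {e e' : ℕ → ℤ} {N : ℕ} (h : ∀ i < N, e i = e' i) :
    expProd x e N = expProd x e' N :=
  Finset.prod_congr rfl fun i hi => by rw [h i (Finset.mem_range.1 hi)]

def reducedDigits (i : ℕ) : Set ℤ :=
  if relOrder x i = 0 then univ else Ico 0 (relOrder x i)

theorem emod_relOrder_of_mem_reducedDigits {i : ℕ} {d : ℤ} (hd : d ∈ reducedDigits x i) :
    d % relOrder x i = d := by
  unfold reducedDigits at hd
  split_ifs at hd with h
  · rw [h, Nat.cast_zero, Int.emod_zero]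
  · exact Int.emod_eq_of_lt hd.1 hd.2

theorem emod_mem_reducedDigits (a : ℤ) (i : ℕ) : a % relOrder x i ∈ reducedDigits x i := by
  unfold reducedDigits
  split_ifs with h
  · exact mem_univ _
  · exact ⟨Int.emod_nonneg _ (by omega), Int.emod_lt_of_pos _ (by omega)⟩

theorem eq_of_expProd_eq {N : ℕ} {e e' : ℕ → ℤ} (he : ∀ i < N, e i ∈ reducedDigits x i)
    (he' : ∀ i < N, e' i ∈ reducedDigits x i) (heq : expProd x e N = expProd x e' N) :
    ∀ i < N, e i = e' i := by
  induction N with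
  | zero => intro _ hi; omega
  | succ N ih =>
    rw [expProd_succ, expProd_succ] at heq
    have hdvd : (relOrder x N : ℤ) ∣ e' N - e N := by
      have hquot : x N ^ (e' N - e N) = expProd x e N / expProd x e' N := by
        rw [zpow_sub, ← div_eq_mul_inv, div_eq_div_iff_mul_eq_mul, ← heq, mul_comm]
      rw [← zpow_mem_prefixClosure_iff, hquot]
      exact div_mem (expProd_mem x e N) (expProd_mem x e' N)
    have htop : e N = e' N := by
      rw [← emod_relOrder_of_mem_reducedDigits x (he N N.lt_succ_self),
        ← emod_relOrder_of_mem_reducedDigits x (he' N N.lt_succ_self)]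
      exact Int.ModEq.eq (Int.modEq_iff_dvd.2 hdvd)
    rw [htop, mul_right_inj] at heq
    intro i hi
    rcases Nat.lt_succ_iff_lt_or_eq.1 hi with hi | rfl
    exacts [ih (fun i hi => he i (by omega)) (fun i hi => he' i (by omega)) heq i hi, htop]

theorem exists_expProd_eq {N : ℕ} {g : G} (hg : g ∈ prefixClosure x N) :
    ∃ e ∈ boxSet (reducedDigits x) N, expProd x e N = g := by
  induction N generalizing g with
  | zero =>
    rw [prefixClosure_zero, Subgroup.mem_bot] at hg
    exact ⟨0, mem_boxSet.2 ⟨fun _ hi => absurd hi (Nat.not_lt_zero _), fun _ _ => rfl⟩,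
      by rw [expProd_zero, hg]⟩
  | succ N ih =>
    rw [prefixClosure_succ, Subgroup.mem_sup] at hg
    obtain ⟨_, ⟨a, rfl⟩, z, hz, rfl⟩ := hg
    set k : ℤ := (relOrder x N : ℤ)
    have hz' : x N ^ (k * (a / k)) * z ∈ prefixClosure x N :=
      mul_mem ((zpow_mem_prefixClosure_iff x).2 (dvd_mul_right _ _)) hz
    obtain ⟨e, he, hez⟩ := ih hz'
    obtain ⟨he, he0⟩ := mem_boxSet.1 he
    refine ⟨Function.update e N (a % k), mem_boxSet.2 ⟨fun i hi => ?_, fun i hi => ?_⟩, ?_⟩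
    · rcases Nat.lt_succ_iff_lt_or_eq.1 hi with hi | rfl
      · rw [Function.update_of_ne hi.ne]
        exact he i hi
      · rw [Function.update_self]
        exact emod_mem_reducedDigits x a i
    · rw [Function.update_of_ne (by omega)]
      exact he0 i (by omega)
    · rw [expProd_succ, Function.update_self,
        expProd_congr x fun i hi => Function.update_of_ne hi.ne _ _, hez, ← mul_assoc, ← zpow_add,
        Int.emod_add_mul_ediv]

theorem bijOn_expProd (N : ℕ) :
    BijOn (expProd x · N) (boxSet (reducedDigits x) N) (prefixClosure x N) := by
  refine ⟨fun e _ => expProd_mem x e N, fun e he e' he' heq => funext fun i => ?_,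
    fun g hg => exists_expProd_eq x hg⟩
  rcases lt_or_ge i N with hi | hi
  · exact eq_of_expProd_eq x (mem_boxSet.1 he).1 (mem_boxSet.1 he').1 heq i hi
  · rw [(mem_boxSet.1 he).2 i hi, (mem_boxSet.1 he').2 i hi]

theorem injOn_expProd {D : ℕ → Set ℤ} {N : ℕ} (hD : ∀ i < N, D i ⊆ reducedDigits x i) :
    InjOn (expProd x · N) (boxSet D N) :=
  (bijOn_expProd x N).injOn.mono (boxSet_mono hD)

end NormalForm

def halfWidth (N i : ℕ) : ℕ := 3 ^ (N - i - 1)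

theorem halfWidth_pos (N i : ℕ) : 0 < halfWidth N i := by
  unfold halfWidth; positivity

theorem halfWidth_succ {N i : ℕ} (h : i < N) : halfWidth (N + 1) i = 3 * halfWidth N i := by
  rw [halfWidth, halfWidth, show N + 1 - i - 1 = N - i - 1 + 1 by omega, pow_succ, mul_comm]

theorem tendsto_halfWidth (i : ℕ) : Tendsto (fun N => (halfWidth N i : ℝ)) atTop atTop := by
  simp_rw [halfWidth, Nat.cast_pow, Nat.sub_sub]
  exact (tendsto_pow_atTop_atTop_of_one_lt (by norm_num : (1 : ℝ) < 3)).comp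
    (tendsto_sub_atTop_nat (i + 1))

section Digits

variable {G : Type*} [CommGroup G] (x : ℕ → G)

noncomputable def digits (N i : ℕ) : Finset ℤ :=
  if relOrder x i = 0 then Finset.Ico (-(halfWidth N i : ℤ)) (halfWidth N i)
  else Finset.Ico 0 (relOrder x i)

theorem zero_mem_digits (N i : ℕ) : 0 ∈ digits x N i := by
  have := halfWidth_pos N i
  unfold digits
  split_ifs with h <;> simp only [Finset.mem_Ico] <;> omega

theorem digits_subset_reducedDigits (N i : ℕ) : ↑(digits x N i) ⊆ reducedDigits x i := by
  unfold digits reducedDigits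
  split_ifs with h
  · exact subset_univ _
  · simp

/-- Exponents of the translations by which `tile x N` tiles `prefixClosure x N`. -/
def latticeDigits (N i : ℕ) : Set ℤ :=
  if relOrder x i = 0 then range (2 * (halfWidth N i : ℤ) * ·) else {0}

end Digits

section Tiles

variable {G : Type*} [CommGroup G] [DecidableEq G] (x : ℕ → G)

noncomputable def expBox (D : ℕ → Finset ℤ) (N : ℕ) : Finset G :=
  (boxFinset D N).image (expProd x · N)

theorem coe_expBox (D : ℕ → Finset ℤ) (N : ℕ) :
    (expBox x D N : Set G) = (expProd x · N) '' boxSet (fun i => D i) N := by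
  rw [expBox, Finset.coe_image, coe_boxFinset]

theorem card_expBox {D : ℕ → Finset ℤ} {N : ℕ} (hD : ∀ i < N, ↑(D i) ⊆ reducedDigits x i) :
    (expBox x D N).card = ∏ i ∈ Finset.range N, (D i).card := by
  rw [expBox, Finset.card_image_of_injOn (by rw [coe_boxFinset]; exact injOn_expProd x hD),
    card_boxFinset]

noncomputable def tile (N : ℕ) : Finset G := expBox x (digits x N) N

theorem one_mem_tile (N : ℕ) : 1 ∈ tile x N := by
  rw [← Finset.mem_coe, tile, coe_expBox]
  exact ⟨0, mem_boxSet.2 ⟨fun i _ => zero_mem_digits x N i, fun _ _ => rfl⟩, expProd_zero x N⟩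

theorem isLeftMonotile_tile (N : ℕ) : IsLeftMonotile (tile x N) := by
  have hbij := bijOn_mul_image_of_map_add (fun a b => expProd_add x a b N)
    (bijOn_add_boxSet (S := latticeDigits x N) (D := fun i => digits x N i) fun i _ => ?_)
    (bijOn_expProd x N).injOn
  · rw [(bijOn_expProd x N).image_eq, ← coe_expBox] at hbij
    exact isLeftMonotile_of_bijOn_subgroup _ hbij
  · unfold latticeDigits digits reducedDigits
    split_ifs with h
    · simpa using bijOn_add_lattice_Ico (Int.natCast_pos.2 (halfWidth_pos N i))
    · simpa using bijOn_add_zero_left (Ico (0 : ℤ) (relOrder x i))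

end Tiles

section Congruence

variable {G : Type*} [CommGroup G] (x : ℕ → G)

noncomputable def shifts (N i : ℕ) : Finset ℤ :=
  if i = N then digits x (N + 1) N
  else if relOrder x i = 0 then {-(2 * (halfWidth N i : ℤ)), 0, 2 * (halfWidth N i : ℤ)}
  else {0}

theorem zero_mem_shifts (N i : ℕ) : 0 ∈ shifts x N i := by
  unfold shifts
  split_ifs
  · exact zero_mem_digits x (N + 1) N
  · simp
  · simp

theorem bijOn_add_shifts_digits {N i : ℕ} (hi : i < N + 1) :
    BijOn (fun p : ℤ × ℤ => p.1 + p.2)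
      ((shifts x N i : Set ℤ) ×ˢ Function.update (fun j => (digits x N j : Set ℤ)) N {0} i)
      (digits x (N + 1) i) := by
  rcases Nat.lt_succ_iff_lt_or_eq.1 hi with hi | rfl
  · rw [Function.update_of_ne hi.ne, shifts, if_neg hi.ne]
    unfold digits
    split_ifs with h
    · simpa [halfWidth_succ hi] using bijOn_add_triple_Ico (halfWidth N i : ℤ)
    · simpa using bijOn_add_zero_left (Ico (0 : ℤ) (relOrder x i))
  · simpa [shifts] using bijOn_add_zero_right (digits x (i + 1) i : Set ℤ)

variable [DecidableEq G]

noncomputable def tileShifts (N : ℕ) : Finset G := expBox x (shifts x N) (N + 1)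

theorem one_mem_tileShifts (N : ℕ) : 1 ∈ tileShifts x N := by
  rw [← Finset.mem_coe, tileShifts, coe_expBox]
  exact ⟨0, mem_boxSet.2 ⟨fun i _ => zero_mem_shifts x N i, fun _ _ => rfl⟩, expProd_zero x _⟩

theorem coe_tile_eq_image_succ (N : ℕ) :
    (tile x N : Set G) = (expProd x · (N + 1)) ''
      boxSet (Function.update (fun i => (digits x N i : Set ℤ)) N {0}) (N + 1) := by
  rw [boxSet_update_zero, tile, coe_expBox]
  refine image_congr fun e he => ?_
  exact (expProd_eq_of_le x N.le_succ (mem_boxSet.1 he).2).symm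

theorem bijOn_mul_tileShifts_tile (N : ℕ) :
    BijOn (fun p : G × G => p.1 * p.2) (↑(tileShifts x N) ×ˢ ↑(tile x N)) ↑(tile x (N + 1)) := by
  rw [coe_tile_eq_image_succ, tileShifts, coe_expBox, tile, coe_expBox]
  exact bijOn_mul_image_of_map_add (fun a b => expProd_add x a b (N + 1))
    (bijOn_add_boxSet fun i hi => bijOn_add_shifts_digits x hi)
    (injOn_expProd x fun i _ => digits_subset_reducedDigits x (N + 1) i)

theorem isCongruentSeq_tile : IsCongruentSeq (tile x) := by
  refine ⟨one_mem_tile x 0, fun N => ?_⟩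
  obtain ⟨hunion, hdisj⟩ :=
    biUnion_smul_eq_and_pairwiseDisjoint_of_bijOn (bijOn_mul_tileShifts_tile x N)
  exact ⟨tileShifts x N, one_mem_tileShifts x N, hdisj, hunion⟩

end Congruence

section Folner

variable {G : Type*} [CommGroup G] (x : ℕ → G)

noncomputable def shrunkDigits (m Δ N i : ℕ) : Finset ℤ :=
  if relOrder x i = 0 ∧ i ≤ m then
    Finset.Ico (-(halfWidth N i : ℤ) + Δ) (halfWidth N i - Δ)
  else digits x N i

theorem shrunkDigits_subset_digits (m Δ N i : ℕ) : shrunkDigits x m Δ N i ⊆ digits x N i := by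
  unfold shrunkDigits digits
  split_ifs with h h'
  · exact Finset.Ico_subset_Ico (by omega) (by omega)
  · exact absurd h.1 h'
  all_goals exact subset_rfl

theorem shrunkDigits_of_lt {m Δ N i : ℕ} (h : m < i) : shrunkDigits x m Δ N i = digits x N i :=
  if_neg fun h' => by omega

theorem card_digits_sub_card_shrunkDigits_div_le (m Δ N i : ℕ) :
    (((digits x N i).card : ℝ) - (shrunkDigits x m Δ N i).card) / (digits x N i).card ≤
      Δ / halfWidth N i := by
  unfold shrunkDigits
  split_ifs with h
  · have hW : (0 : ℝ) < halfWidth N i := by exact_mod_cast halfWidth_pos N i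
    have hcard : (digits x N i).card = 2 * halfWidth N i := by
      rw [digits, if_pos h.1, Int.card_Ico]
      omega
    have hdiff : (digits x N i).card ≤
        (Finset.Ico (-(halfWidth N i : ℤ) + Δ) (halfWidth N i - Δ)).card + 2 * Δ := by
      rw [digits, if_pos h.1]
      simp only [Int.card_Ico]
      omega
    have hdiff' := (Nat.cast_le (α := ℝ)).2 hdiff
    rw [hcard] at hdiff' ⊢
    push_cast at hdiff' ⊢
    rw [div_le_div_iff₀ (by positivity) hW]
    nlinarith
  · rw [sub_self, zero_div]
    positivity

noncomputable def torsionDigits (i : ℕ) : Finset ℤ :=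
  if relOrder x i = 0 then {0} else Finset.Ico 0 (relOrder x i)

theorem exists_bounded_reduced_expProd_mul_eq {m : ℕ} {g : G} (hg : g ∈ prefixClosure x (m + 1)) :
    ∃ Δ : ℕ, ∀ v ∈ boxFinset (torsionDigits x) (m + 1), ∃ w ∈ boxSet (reducedDigits x) (m + 1),
      expProd x w (m + 1) = expProd x v (m + 1) * g ∧ ∀ i, |w i| ≤ Δ := by
  choose w hw hwe using fun v => exists_expProd_eq x (mul_mem (expProd_mem x v (m + 1)) hg)
  refine ⟨(boxFinset (torsionDigits x) (m + 1)).sup fun v =>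
    (Finset.range (m + 1)).sup fun i => (w v i).natAbs, fun v hv => ⟨w v, hw v, hwe v, fun i => ?_⟩⟩
  rcases lt_or_ge i (m + 1) with hi | hi
  · have := (Finset.le_sup (f := fun i => (w v i).natAbs) (Finset.mem_range.2 hi)).trans
      (Finset.le_sup (f := fun v => (Finset.range (m + 1)).sup fun i => (w v i).natAbs) hv)
    rw [Int.abs_eq_natAbs]
    exact_mod_cast this
  · simp [(mem_boxSet.1 (hw v)).2 i hi]

variable [DecidableEq G]

/-- Splitting off the torsion part `v` of `e`, multiplication by `g` replaces it by the normal
form `w` of `expProd v * g`, which moves the free exponents by at most `Δ`. -/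
theorem exists_forall_expProd_mul_mem_tile {m : ℕ} {g : G} (hg : g ∈ prefixClosure x (m + 1)) :
    ∃ Δ : ℕ, ∀ N, m + 1 ≤ N → ∀ e ∈ boxSet (fun i => shrunkDigits x m Δ N i) N,
      expProd x e N * g ∈ tile x N := by
  obtain ⟨Δ, hΔ⟩ := exists_bounded_reduced_expProd_mul_eq x hg
  refine ⟨Δ, fun N hN e he => ?_⟩
  obtain ⟨he, he0⟩ := mem_boxSet.1 he
  set v : ℕ → ℤ := fun i => if relOrder x i ≠ 0 ∧ i ≤ m then e i else 0 with hv_def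
  have hv0 : ∀ i, m + 1 ≤ i → v i = 0 := fun i hi => if_neg fun h => by omega
  have hv : v ∈ boxFinset (torsionDigits x) (m + 1) := by
    rw [← Finset.mem_coe, coe_boxFinset, mem_boxSet]
    refine ⟨fun i hi => ?_, hv0⟩
    have hei := he i (by omega)
    simp only [hv_def, torsionDigits, shrunkDigits, digits] at hei ⊢
    split_ifs at hei ⊢ <;> simp_all
  obtain ⟨w, hw, hwe, hwΔ⟩ := hΔ v hv
  obtain ⟨hw, hw0⟩ := mem_boxSet.1 hw
  have hmem : e - v + w ∈ boxSet (fun i => digits x N i) N := by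
    refine mem_boxSet.2 ⟨fun i hi => ?_, fun i hi => ?_⟩
    · have hei := he i hi
      rcases lt_or_ge i (m + 1) with him | him
      · have hwi := hw i him
        have hwΔi := abs_le.1 (hwΔ i)
        simp only [hv_def, shrunkDigits, digits, reducedDigits, Pi.add_apply, Pi.sub_apply]
          at hei hwi ⊢
        split_ifs at hei hwi ⊢ <;> simp only [Finset.coe_Ico, mem_Ico] at hei hwi ⊢ <;> omega
      · rw [shrunkDigits_of_lt x (by omega)] at hei
        simpa [hv0 i him, hw0 i him] using hei
    · simp [he0 i hi, hv0 i (by omega), hw0 i (by omega)]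
  rw [← Finset.mem_coe, tile, coe_expBox]
  refine ⟨e - v + w, hmem, ?_⟩
  dsimp only
  rw [expProd_add, expProd_eq_of_le x hN hw0, hwe, ← expProd_eq_of_le x hN hv0, ← mul_assoc,
    ← expProd_add, sub_add_cancel]

theorem card_image_mul_sdiff_expBox_div_le {D D' : ℕ → Finset ℤ} {N : ℕ} {g : G}
    (hD : ∀ i < N, ↑(D i) ⊆ reducedDigits x i) (hD' : ∀ i < N, D' i ⊆ D i)
    (hne : ∀ i < N, (D i).Nonempty)
    (hmul : ∀ e ∈ boxSet (fun i => D' i) N, expProd x e N * g ∈ expBox x D N) :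
    (((expBox x D N).image (· * g) \ expBox x D N).card : ℝ) / (expBox x D N).card ≤
      ∑ i ∈ Finset.range N, (((D i).card : ℝ) - (D' i).card) / (D i).card := by
  have hsub : expBox x D' N ⊆ expBox x D N := by
    rw [← Finset.coe_subset, coe_expBox, coe_expBox]
    exact image_mono (boxSet_mono fun i hi => Finset.coe_subset.2 (hD' i hi))
  have hcard := card_image_mul_sdiff_le hsub fun a ha => by
    rw [← Finset.mem_coe, coe_expBox] at ha
    obtain ⟨e, he, rfl⟩ := ha
    exact hmul e he
  rw [← Nat.cast_le (α := ℝ), Nat.cast_sub (Finset.card_le_card hsub), card_expBox x hD,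
    card_expBox x fun i hi => (Finset.coe_subset.2 (hD' i hi)).trans (hD i hi)] at hcard
  have hpos : ∀ i ∈ Finset.range N, (0 : ℝ) < (D i).card := fun i hi => by
    exact_mod_cast (hne i (Finset.mem_range.1 hi)).card_pos
  rw [card_expBox x hD]
  push_cast at hcard ⊢
  exact (div_le_div_of_nonneg_right hcard (Finset.prod_pos hpos).le).trans
    (prod_sub_prod_div_le_sum _ hpos (fun i _ => Nat.cast_nonneg _)
      fun i hi => by exact_mod_cast Finset.card_le_card (hD' i (Finset.mem_range.1 hi)))

theorem tendsto_card_image_mul_sdiff_tile_div {m : ℕ} {g : G} (hg : g ∈ prefixClosure x (m + 1)) :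
    Tendsto (fun N => (((tile x N).image (· * g) \ tile x N).card : ℝ) / (tile x N).card)
      atTop (𝓝 0) := by
  obtain ⟨Δ, hΔ⟩ := exists_forall_expProd_mul_mem_tile x hg
  have hlim : Tendsto (fun N => ∑ i ∈ Finset.range (m + 1), (Δ : ℝ) / halfWidth N i)
      atTop (𝓝 0) := by
    simpa using tendsto_finsetSum _ fun i _ => tendsto_const_nhds.div_atTop (tendsto_halfWidth i)
  refine squeeze_zero' (Eventually.of_forall fun N => by positivity) ?_ hlim
  filter_upwards [eventually_ge_atTop (m + 1)] with N hN
  calc _ ≤ ∑ i ∈ Finset.range N, (((digits x N i).card : ℝ) - (shrunkDigits x m Δ N i).card) /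
        (digits x N i).card :=
        card_image_mul_sdiff_expBox_div_le x (fun i _ => digits_subset_reducedDigits x N i)
          (fun i _ => shrunkDigits_subset_digits x m Δ N i)
          (fun i _ => ⟨0, zero_mem_digits x N i⟩) (hΔ N hN)
    _ = ∑ i ∈ Finset.range (m + 1), (((digits x N i).card : ℝ) - (shrunkDigits x m Δ N i).card) /
        (digits x N i).card := by
        refine (Finset.sum_subset (Finset.range_subset_range.2 hN) fun i _ hi => ?_).symm
        rw [shrunkDigits_of_lt x (by simpa using hi), sub_self, zero_div]
    _ ≤ _ := Finset.sum_le_sum fun i _ => card_digits_sub_card_shrunkDigits_div_le x m Δ N i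

theorem exists_mem_tile {m : ℕ} {g : G} (hg : g ∈ prefixClosure x m) : ∃ N, g ∈ tile x N := by
  obtain ⟨e, he, rfl⟩ := exists_expProd_eq x hg
  obtain ⟨he, he0⟩ := mem_boxSet.1 he
  set M := (Finset.range m).sup fun i => (e i).natAbs
  refine ⟨m + M, ?_⟩
  rw [← Finset.mem_coe, tile, coe_expBox, ← expProd_eq_of_le x (Nat.le_add_right m M) he0]
  refine ⟨e, mem_boxSet.2 ⟨fun i hi => ?_, fun i hi => he0 i (by omega)⟩, rfl⟩
  rcases lt_or_ge i m with him | him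
  · have hM : (e i).natAbs ≤ M :=
      Finset.le_sup (f := fun i => (e i).natAbs) (Finset.mem_range.2 him)
    have hW : M < halfWidth (m + M) i :=
      (Nat.lt_pow_self (by norm_num)).trans_le (Nat.pow_le_pow_right (by norm_num) (by omega))
    have hei := he i him
    rw [Finset.mem_coe, digits]
    unfold reducedDigits at hei
    split_ifs at hei ⊢ with h
    · simp only [Finset.mem_Ico]
      omega
    · simpa using hei
  · simp [he0 i him, zero_mem_digits]

end Folner

end CongruentMonotile

/-- every countable abelian group is congruent monotileable: it admits an
exhaustive congruent right Følner sequence made of left monotiles. -/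
theorem countable_abelian_congruentMonotileable (G : Type*) [CommGroup G] [Countable G]
    [DecidableEq G] :
    ∃ F : ℕ → Finset G, IsRightFolner F ∧ IsCongruentSeq F ∧
      (∀ n, IsLeftMonotile (F n)) ∧ (⋃ n, (F n : Set G)) = Set.univ := by
  open CongruentMonotile in
  obtain ⟨x, hx⟩ := exists_surjective_nat G
  have hgen (g : G) : ∃ m, g ∈ prefixClosure x (m + 1) :=
    let ⟨m, hm⟩ := hx g; ⟨m, hm ▸ mem_prefixClosure x m.lt_succ_self⟩
  refine ⟨tile x, ⟨fun N => ⟨1, one_mem_tile x N⟩, fun g => ?_⟩, isCongruentSeq_tile x,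
    isLeftMonotile_tile x, Set.eq_univ_of_forall fun g => ?_⟩
  · obtain ⟨m, hm⟩ := hgen g
    exact tendsto_card_image_mul_sdiff_tile_div x hm
  · obtain ⟨m, hm⟩ := hgen g
    obtain ⟨N, hN⟩ := exists_mem_tile x hm
    exact Set.mem_iUnion.2 ⟨N, hN⟩
end

section
/- Let (X, σ|_X, G) be the subshift constructed from a congruent exhaustive right Følner sequence (F_n) and patterns (B_{n,k}) satisfying (C1), (C2), (C3), with C_{n,k} = {x ∈ X : x|_{F_n} = B_{n,k}} and C_n = ⋃_k C_{n,k}. Then for any invariant Borel probability measure μ on X and any g ∈ G and n ≥ 0, μ(⋃_{k=1}^{k_n} ⋃_{v ∈ F_n \ F_n g} σ^{v^{-1}}(C_{n,k})) = |F_n \ F_n g| / |F_n|. Consequently, the set ∂X = ⋃_{g ∈ G} ⋂_{n≥0} ⋃_k ⋃_{v ∈ F_n \ F_n g} σ^{v^{-1}}(C_{n,k}) has μ-measure zero for every invariant measure μ; i.e., X \ ∂X is a full measure set. -/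
open Filter MeasureTheory
open scoped ENNReal

/-!
By invariance each level `⋃ i, σ^{v⁻¹}(C_{n,i})`, `v ∈ F n`, has measure `∑ i, μ (C_{n,i})`;
the levels partition a set of full measure, so this common mass is `1 / |F n|`, and any sub-tower
indexed by `T ⊆ F n` has measure `|T| / |F n|`. Taking `T = F n \ F n g`, whose size equals
`|F n g \ F n|`, the Følner condition makes these measures tend to `0`, so each set
`⋂ n, …` in the union defining `∂X` is null, and so is the countable union.
-/

/-- The left shift action of `G` on `A^G`: `(σ^g x) h = x (g⁻¹ h)`. -/
def shiftMap {G A : Type*} [Group G] (g : G) (x : G → A) : G → A := fun h => x (g⁻¹ * h)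

theorem measurable_shiftMap {G A : Type*} [Group G] [MeasurableSpace A] (g : G) :
    Measurable (shiftMap (A := A) g) :=
  measurable_pi_lambda _ fun _ => measurable_pi_apply _

theorem measurePreserving_shiftMap {G A : Type*} [Group G] [MeasurableSpace A]
    {μ : Measure (G → A)}
    (hinv : ∀ (g : G) (S : Set (G → A)), MeasurableSet S → μ (shiftMap g ⁻¹' S) = μ S)
    (g : G) : MeasurePreserving (shiftMap g) μ μ :=
  ⟨measurable_shiftMap g, Measure.ext fun S hS => by
    rw [Measure.map_apply (measurable_shiftMap g) hS, hinv g S hS]⟩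

section Tower

variable {α G ι : Type*} [MeasurableSpace α] [Fintype ι] {μ : Measure α} {f : G → α → α}
  {C : ι → Set α}

theorem measure_iUnion_biUnion_preimage_eq_card_mul (hf : ∀ v, MeasurePreserving (f v) μ μ)
    (hC : ∀ i, MeasurableSet (C i)) {T : Finset G}
    (hdisj : Set.PairwiseDisjoint {p : G × ι | p.1 ∈ T} fun p => f p.1 ⁻¹' C p.2) :
    μ (⋃ i, ⋃ v ∈ T, f v ⁻¹' C i) = T.card * ∑ i, μ (C i) := by
  have hunion : (⋃ i, ⋃ v ∈ T, f v ⁻¹' C i) = ⋃ p ∈ T ×ˢ Finset.univ, f p.1 ⁻¹' C p.2 := by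
    ext x
    simp only [Set.mem_iUnion, Finset.mem_product, Finset.mem_univ, and_true, Prod.exists,
      exists_prop]
    tauto
  rw [hunion, measure_biUnion_finset (hdisj.subset fun p hp => (Finset.mem_product.1 hp).1)
    fun p _ => (hC p.2).preimage (hf p.1).measurable, Finset.sum_product]
  simp only [fun v i => (hf v).measure_preimage (hC i).nullMeasurableSet, Finset.sum_const,
    nsmul_eq_mul]

theorem measure_iUnion_biUnion_preimage_eq_card_div [IsProbabilityMeasure μ]
    (hf : ∀ v, MeasurePreserving (f v) μ μ) (hC : ∀ i, MeasurableSet (C i)) {F : Finset G}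
    (hdisj : Set.PairwiseDisjoint {p : G × ι | p.1 ∈ F} fun p => f p.1 ⁻¹' C p.2)
    {X : Set α} (hX : μ X = 1) (hcover : X ⊆ ⋃ v ∈ F, ⋃ i, f v ⁻¹' C i)
    {T : Finset G} (hT : T ⊆ F) :
    μ (⋃ i, ⋃ v ∈ T, f v ⁻¹' C i) = T.card / F.card := by
  have hfull : (F.card : ℝ≥0∞) * ∑ i, μ (C i) = 1 := by
    rw [← measure_iUnion_biUnion_preimage_eq_card_mul hf hC hdisj]
    refine le_antisymm prob_le_one (hX ▸ measure_mono fun x hx => ?_)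
    obtain ⟨v, hv, i, hi⟩ : ∃ v ∈ F, ∃ i, x ∈ f v ⁻¹' C i := by simpa using hcover hx
    exact Set.mem_iUnion.2 ⟨i, Set.mem_biUnion hv hi⟩
  rw [measure_iUnion_biUnion_preimage_eq_card_mul hf hC (hdisj.subset fun p hp => hT hp),
    ENNReal.eq_inv_of_mul_eq_one_left ((mul_comm _ _).trans hfull), div_eq_mul_inv]

end Tower

theorem Finset.card_sdiff_image_eq_card_image_sdiff {α : Type*} [DecidableEq α] {f : α → α}
    (hf : Function.Injective f) (s : Finset α) : (s \ s.image f).card = (s.image f \ s).card :=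
  Finset.card_sdiff_comm (Finset.card_image_of_injective s hf).symm

theorem tendsto_card_sdiff_image_div_card {α ι : Type*} [DecidableEq α] {l : Filter ι}
    {F : ι → Finset α} (hne : ∀ n, (F n).Nonempty) {f : α → α} (hf : Function.Injective f)
    (hFolner : Tendsto (fun n => (((F n).image f \ F n).card : ℝ) / (F n).card) l (nhds 0)) :
    Tendsto (fun n => ((F n \ (F n).image f).card : ℝ≥0∞) / (F n).card) l (nhds 0) := by
  have hofReal : ∀ n, ((F n \ (F n).image f).card : ℝ≥0∞) / (F n).card
      = ENNReal.ofReal ((((F n).image f \ F n).card : ℝ) / (F n).card) := fun n => by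
    rw [ENNReal.ofReal_div_of_pos (mod_cast (hne n).card_pos), ENNReal.ofReal_natCast,
      ENNReal.ofReal_natCast, Finset.card_sdiff_image_eq_card_image_sdiff hf]
  simpa only [hofReal, ENNReal.ofReal_zero] using ENNReal.tendsto_ofReal hFolner

theorem measure_iInter_eq_zero_of_tendsto {α : Type*} [MeasurableSpace α] {μ : Measure α}
    {s : ℕ → Set α} {a : ℕ → ℝ≥0∞} (hs : ∀ n, μ (s n) = a n) (ha : Tendsto a atTop (nhds 0)) :
    μ (⋂ n, s n) = 0 :=
  le_antisymm (ge_of_tendsto' ha fun n => hs n ▸ measure_mono (Set.iInter_subset s n)) bot_le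

theorem boundary_null_general {G A : Type*} [Group G] [DecidableEq G] [Countable G]
    [MeasurableSpace A]
    (F : ℕ → Finset G)
    (hFolner : ∀ g : G,
      Tendsto (fun n => (((F n).image (· * g) \ F n).card : ℝ) / ((F n).card : ℝ))
        atTop (nhds 0))
    (X : Set (G → A)) (k : ℕ → ℕ)
    (C : (n : ℕ) → Fin (k n) → Set (G → A))
    (hmeas : ∀ n i, MeasurableSet (C n i))
    (hcover : ∀ n, X ⊆ ⋃ v ∈ F n, ⋃ i, shiftMap v ⁻¹' C n i)
    (hdisj : ∀ n, Set.PairwiseDisjoint {p : G × Fin (k n) | p.1 ∈ F n}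
      (fun p => shiftMap p.1 ⁻¹' C n p.2))
    (μ : Measure (G → A)) [IsProbabilityMeasure μ]
    (hX : μ X = 1)
    (hinv : ∀ (g : G) (S : Set (G → A)), MeasurableSet S → μ (shiftMap g ⁻¹' S) = μ S) :
    (∀ (g : G) (n : ℕ),
      μ (⋃ i, ⋃ v ∈ F n \ (F n).image (· * g), shiftMap v ⁻¹' C n i) =
        ((F n \ (F n).image (· * g)).card : ℝ≥0∞) / ((F n).card : ℝ≥0∞)) ∧
    μ (⋃ g : G, ⋂ n, ⋃ i, ⋃ v ∈ F n \ (F n).image (· * g), shiftMap v ⁻¹' C n i) = 0 := by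
  have hborder : ∀ (g : G) (n : ℕ),
      μ (⋃ i, ⋃ v ∈ F n \ (F n).image (· * g), shiftMap v ⁻¹' C n i) =
        ((F n \ (F n).image (· * g)).card : ℝ≥0∞) / ((F n).card : ℝ≥0∞) := fun g n =>
    measure_iUnion_biUnion_preimage_eq_card_div (measurePreserving_shiftMap hinv) (hmeas n)
      (hdisj n) hX (hcover n) Finset.sdiff_subset
  have hne : ∀ n, (F n).Nonempty := fun n => by
    by_contra! hempty
    have hX0 : X = ∅ := by simpa [hempty] using hcover n
    simp [hX0] at hX
  refine ⟨hborder, measure_iUnion_null fun g => measure_iInter_eq_zero_of_tendsto (hborder g) ?_⟩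
  exact tendsto_card_sdiff_image_div_card hne (mul_left_injective g) (hFolner g)

/-- Lemma `border`: let `(F n)` be a right Følner sequence, `X` the
subshift with clopen Kakutani–Rokhlin partitions
`P_n = {σ^{v⁻¹}(C_{n,i}) : v ∈ F n, i}` (here `σ^{v⁻¹}(C) = shiftMap v ⁻¹' C`), and
let `μ` be a shift-invariant Borel probability measure giving `X` full measure. Then
for every `g` and `n`,
`μ (⋃_i ⋃_{v ∈ F n \ F n g} σ^{v⁻¹}(C_{n,i})) = |F n \ F n g| / |F n|`,
and consequently the boundary set
`∂X = ⋃_g ⋂_n ⋃_i ⋃_{v ∈ F n \ F n g} σ^{v⁻¹}(C_{n,i})` is `μ`-null;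
i.e. `X \ ∂X` is a full measure set. -/
theorem boundary_null {G A : Type*} [Group G] [DecidableEq G] [Countable G]
    [MeasurableSpace A]
    (F : ℕ → Finset G) (hne : ∀ n, (F n).Nonempty)
    (hFolner : ∀ g : G,
      Tendsto (fun n => (((F n).image (· * g) \ F n).card : ℝ) / ((F n).card : ℝ))
        atTop (nhds 0))
    (X : Set (G → A)) (k : ℕ → ℕ)
    (C : (n : ℕ) → Fin (k n) → Set (G → A))
    (hmeas : ∀ n i, MeasurableSet (C n i))
    (hcover : ∀ n, X ⊆ ⋃ v ∈ F n, ⋃ i, shiftMap v ⁻¹' C n i)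
    (hsub : ∀ n, ∀ v ∈ F n, ∀ i, shiftMap v ⁻¹' C n i ⊆ X)
    (hdisj : ∀ n, Set.PairwiseDisjoint {p : G × Fin (k n) | p.1 ∈ F n}
      (fun p => shiftMap p.1 ⁻¹' C n p.2))
    (μ : Measure (G → A)) [IsProbabilityMeasure μ]
    (hX : μ X = 1)
    (hinv : ∀ (g : G) (S : Set (G → A)), MeasurableSet S → μ (shiftMap g ⁻¹' S) = μ S) :
    (∀ (g : G) (n : ℕ),
      μ (⋃ i, ⋃ v ∈ F n \ (F n).image (· * g), shiftMap v ⁻¹' C n i) =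
        ((F n \ (F n).image (· * g)).card : ℝ≥0∞) / ((F n).card : ℝ≥0∞)) ∧
    μ (⋃ g : G, ⋂ n, ⋃ i, ⋃ v ∈ F n \ (F n).image (· * g), shiftMap v ⁻¹' C n i) = 0 :=
  boundary_null_general F hFolner X k C hmeas hcover hdisj μ hX hinv
end

section
/- Let (X, σ|_X, G) be a minimal G-subshift with a nested sequence of clopen Kakutani–Rokhlin partitions P_n = {σ^{v^{-1}}(C_{n,k}) : v ∈ F_n, 1 ≤ k ≤ k_n} coming from a right Følner sequence (F_n). If x ∈ X and g ∈ G \ {1} satisfy σ^g(x) = x, then for every n, the element v_n ∈ F_n with x ∈ σ^{v_n^{-1}}(C_n) satisfies v_n ∈ F_n \ F_n g. Consequently, the action is free at every point x outside ∂X = ⋃_{g≠1} ⋂_n ⋃_k ⋃_{v ∈ F_n \ F_n g} σ^{v^{-1}}(C_{n,k}). -/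
/-- let `X ⊆ A^G` carry, for each `n`, a Kakutani–Rokhlin partition
`P_n = {σ^{v⁻¹}(C_{n,i}) : v ∈ F n, i}` (here `σ^{v⁻¹}(C) = shiftMap v ⁻¹' C`).
If `x ∈ X` and `g ≠ 1` satisfy `σ^g(x) = x`, then for every `n`, any `v ∈ F n` with
`x ∈ σ^{v⁻¹}(C_n)` satisfies `v ∈ F n \ F n g`. Consequently the action is free at
every point of `X` outside
`∂X = ⋃_{g ≠ 1} ⋂_n ⋃_i ⋃_{v ∈ F n \ F n g} σ^{v⁻¹}(C_{n,i})`. -/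
theorem free_outside_boundary {G A : Type*} [Group G] [DecidableEq G]
    (F : ℕ → Finset G) (X : Set (G → A)) (k : ℕ → ℕ)
    (C : (n : ℕ) → Fin (k n) → Set (G → A))
    (hcover : ∀ n, X ⊆ ⋃ v ∈ F n, ⋃ i, shiftMap v ⁻¹' C n i)
    (hdisj : ∀ n, Set.PairwiseDisjoint {p : G × Fin (k n) | p.1 ∈ F n}
      (fun p => shiftMap p.1 ⁻¹' C n p.2)) :
    (∀ x ∈ X, ∀ g : G, g ≠ 1 → shiftMap g x = x →
      ∀ n, ∀ v ∈ F n, x ∈ (⋃ i, shiftMap v ⁻¹' C n i) → v ∈ F n \ (F n).image (· * g)) ∧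
    (∀ x ∈ X,
      x ∉ (⋃ g ∈ {h : G | h ≠ 1}, ⋂ n, ⋃ i,
        ⋃ v ∈ F n \ (F n).image (· * g), shiftMap v ⁻¹' C n i) →
      ∀ g : G, shiftMap g x = x → g = 1) := by
  have key : ∀ x ∈ X, ∀ g : G, g ≠ 1 → shiftMap g x = x →
      ∀ n, ∀ v ∈ F n, x ∈ (⋃ i, shiftMap v ⁻¹' C n i) → v ∈ F n \ (F n).image (· * g) := by
    intro x hx g hg hfix n v hv hmem
    rw [Finset.mem_sdiff]
    refine ⟨hv, fun hvim => ?_⟩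
    obtain ⟨u, hu, huv⟩ := Finset.mem_image.mp hvim
    obtain ⟨i, hi⟩ := Set.mem_iUnion.mp hmem
    have heq : shiftMap u x = shiftMap v x := by
      conv_lhs => rw [← hfix]
      funext h
      simp [shiftMap, ← huv, mul_assoc, mul_inv_rev]
    have hux : x ∈ shiftMap u ⁻¹' C n i := by
      simpa [Set.mem_preimage, heq] using hi
    have huveq : u = v := by
      by_contra hne
      have hd := hdisj n (show ((u, i) : G × Fin (k n)) ∈ _ from hu)
        (show ((v, i) : G × Fin (k n)) ∈ _ from hv)
        (by simp [Prod.ext_iff, hne])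
      exact Set.disjoint_left.mp hd hux hi
    apply hg
    have : u * g = u := by rw [huv, huveq]
    simpa using this
  refine ⟨key, ?_⟩
  intro x hx hnb g hfix
  by_contra hg
  apply hnb
  refine Set.mem_iUnion₂.mpr ⟨g, hg, Set.mem_iInter.mpr fun n => ?_⟩
  obtain ⟨v, hv, hmem⟩ := Set.mem_iUnion₂.mp (hcover n hx)
  obtain ⟨i, hi⟩ := Set.mem_iUnion.mp hmem
  have hvF := key x hx g hg hfix n v hv (Set.mem_iUnion.mpr ⟨i, hi⟩)
  exact Set.mem_iUnion.mpr ⟨i, Set.mem_iUnion₂.mpr ⟨v, hvF, hi⟩⟩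
end

section
/- Let L, Q be countable discrete amenable groups fitting in a short exact sequence 1 → L → G → Q → 1, and suppose L and Q have congruent exhaustive right Følner sequences made of left monotiles, (U_s) and (T_s) respectively, and that L is contained in the center Z(G). Suppose given liftings T̂_s of T_s with T̂_0 = {1_G} and T̂_{s+1} = ⨆_{ê ∈ Ê_s} ê T̂_s for finite sets Ê_s ⊆ G, and an increasing index sequence (m_s) such that U_{m_{s+1}} = ⨆_{c ∈ C_s} c U_{m_s} with C_s ⊆ L. Then the sequence F_s := U_{m_s} T̂_s is congruent: F_{s+1} = ⨆_{c ∈ C_s, ê ∈ Ê_s} c ê F_s. -/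
open Pointwise

/-- congruency of `F_s = U_{m_s} T̂_s` in Lemma `key-lemma`: let
`π : G → Q` be surjective with central kernel `L = ker π ⊆ Z(G)`. Suppose the finite
sets `U s ⊆ L` satisfy `U (m (s+1)) = ⨆_{c ∈ Cs s} c • U (m s)` with `Cs s ⊆ L`, and
the liftings `Th s` (on which `π` is injective) satisfy `Th 0 = {1}` and
`Th (s+1) = ⨆_{e ∈ Eh s} e • Th s`. Then the sequence `F s := U (m s) * Th s` is
congruent: `F (s+1) = ⨆_{(c,e) ∈ Cs s × Eh s} (c * e) • F s`, a disjoint union. -/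
theorem key_lemma_congruent {G Q : Type*} [Group G] [Group Q] [DecidableEq G]
    (π : G →* Q) (hsurj : Function.Surjective π)
    (hcentral : (π.ker : Set G) ⊆ (Subgroup.center G : Set G))
    (U : ℕ → Finset G) (hU : ∀ s, (U s : Set G) ⊆ (π.ker : Set G))
    (Th : ℕ → Finset G) (hTh0 : Th 0 = {1})
    (hThinj : ∀ s, Set.InjOn π (Th s : Set G))
    (Eh Cs : ℕ → Finset G)
    (hCs : ∀ s, (Cs s : Set G) ⊆ (π.ker : Set G))
    (m : ℕ → ℕ) (hm : StrictMono m)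
    (hThdisj : ∀ s, ((Eh s : Set G)).PairwiseDisjoint (fun e => (e • Th s : Finset G)))
    (hThsucc : ∀ s, (Eh s).biUnion (fun e => e • Th s) = Th (s + 1))
    (hUdisj : ∀ s, ((Cs s : Set G)).PairwiseDisjoint (fun c => (c • U (m s) : Finset G)))
    (hUsucc : ∀ s, (Cs s).biUnion (fun c => c • U (m s)) = U (m (s + 1))) :
    ∀ s : ℕ,
      ((Cs s ×ˢ Eh s : Finset (G × G)) : Set (G × G)).PairwiseDisjoint
        (fun ce => ((ce.1 * ce.2) • (U (m s) * Th s) : Finset G)) ∧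
      (Cs s ×ˢ Eh s).biUnion (fun ce => (ce.1 * ce.2) • (U (m s) * Th s)) =
        U (m (s + 1)) * Th (s + 1) := by
  intro s
  have hcen : ∀ u ∈ U (m s), ∀ g : G, u * g = g * u := fun u hu g =>
    ((Subgroup.mem_center_iff.mp (hcentral (hU (m s) (Finset.mem_coe.mpr hu)))) g).symm
  have hmem : ∀ (c e x : G), x ∈ (c * e) • (U (m s) * Th s) ↔
      ∃ u ∈ U (m s), ∃ t ∈ Th s, x = c * e * (u * t) := by
    intro c e x
    simp only [Finset.mem_smul_finset, Finset.mem_mul, smul_eq_mul]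
    constructor
    · rintro ⟨y, ⟨u, hu, t, ht, rfl⟩, rfl⟩; exact ⟨u, hu, t, ht, rfl⟩
    · rintro ⟨u, hu, t, ht, rfl⟩; exact ⟨u * t, ⟨u, hu, t, ht, rfl⟩, rfl⟩
  have key : ∀ (a e u t : G), u ∈ U (m s) → a * e * (u * t) = (a * u) * (e * t) := by
    intro a e u t hu
    have h := hcen u hu e
    rw [mul_assoc a e, ← mul_assoc e u t, ← h, mul_assoc u e t, ← mul_assoc a u]
  have hmul : ∀ (a b : G) (S : Finset G), b ∈ S → a * b ∈ a • S :=
    fun a b S hb => Finset.smul_mem_smul_finset hb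
  have hker1 : ∀ {g : G}, g ∈ (π.ker : Set G) → π g = 1 := fun h => h
  constructor
  · rintro ⟨c, e⟩ hce ⟨c', e'⟩ hce' hne
    simp only [Finset.mem_coe, Finset.mem_product] at hce hce'
    obtain ⟨hc, he⟩ := hce
    obtain ⟨hc', he'⟩ := hce'
    simp only [Function.onFun]
    rw [Finset.disjoint_left]
    intro x hx hx'
    obtain ⟨u, hu, t, ht, rfl⟩ := (hmem c e x).mp hx
    obtain ⟨u', hu', t', ht', hxeq⟩ := (hmem c' e' _).mp hx'
    have hπc : π c = 1 := hker1 (hCs s (Finset.mem_coe.mpr hc))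
    have hπc' : π c' = 1 := hker1 (hCs s (Finset.mem_coe.mpr hc'))
    have hπu : π u = 1 := hker1 (hU (m s) (Finset.mem_coe.mpr hu))
    have hπu' : π u' = 1 := hker1 (hU (m s) (Finset.mem_coe.mpr hu'))
    have hpe : π (e * t) = π (e' * t') := by
      have h1 : π (c * e * (u * t)) = π (e * t) := by
        simp [map_mul, hπc, hπu]
      have h2 : π (c' * e' * (u' * t')) = π (e' * t') := by
        simp [map_mul, hπc', hπu']
      rw [← h1, ← h2, ← hxeq]
    have hets : e * t ∈ Th (s + 1) := by
      rw [← hThsucc s]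
      exact Finset.mem_biUnion.mpr ⟨e, he, hmul e t _ ht⟩
    have hets' : e' * t' ∈ Th (s + 1) := by
      rw [← hThsucc s]
      exact Finset.mem_biUnion.mpr ⟨e', he', hmul e' t' _ ht'⟩
    have heqet : e * t = e' * t' :=
      hThinj (s + 1) (Finset.mem_coe.mpr hets) (Finset.mem_coe.mpr hets') hpe
    have hee : e = e' := by
      by_contra hee
      have hdisj := hThdisj s (Finset.mem_coe.mpr he) (Finset.mem_coe.mpr he') hee
      exact (Finset.disjoint_left.mp hdisj (hmul e t _ ht))
        (by rw [heqet]; exact hmul e' t' _ ht')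
    subst hee
    have htt : t = t' := mul_left_cancel heqet
    subst htt
    have hcu : c * u = c' * u' := by
      have h1 : c * e * (u * t) = (c * u) * (e * t) := key c e u t hu
      have h2 : c' * e * (u' * t) = (c' * u') * (e * t) := key c' e u' t hu'
      rw [h1, h2] at hxeq
      exact mul_right_cancel hxeq
    have hcc : c = c' := by
      by_contra hcc
      have hdisj := hUdisj s (Finset.mem_coe.mpr hc) (Finset.mem_coe.mpr hc') hcc
      exact (Finset.disjoint_left.mp hdisj (hmul c u _ hu))
        (by rw [hcu]; exact hmul c' u' _ hu')
    exact hne (by rw [hcc])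
  · rw [← hUsucc s, ← hThsucc s]
    ext x
    simp only [Finset.mem_biUnion, Finset.mem_product, Finset.mem_mul,
      Finset.mem_smul_finset, smul_eq_mul, Prod.exists]
    constructor
    · rintro ⟨c, e, ⟨hc, he⟩, y, ⟨u, hu, t, ht, rfl⟩, rfl⟩
      exact ⟨c * u, ⟨c, hc, u, hu, rfl⟩, e * t, ⟨e, he, t, ht, rfl⟩,
        (key c e u t hu).symm⟩
    · rintro ⟨a, ⟨c, hc, u, hu, rfl⟩, b, ⟨e, he, t, ht, rfl⟩, rfl⟩
      exact ⟨c, e, ⟨hc, he⟩, u * t, ⟨u, hu, t, ht, rfl⟩, key c e u t hu⟩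
end
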